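/- Let r ≥ 3 and let G be a simple graph on n vertices with maximum degree Δ(G) ≤ r which satisfies the strong inequalities: t · k_t(G) ≤ (r − t + 1) · k_{t−1}(G) for all t ≥ 3. If n = a(r+1) + b with a ≥ 1 and 0 ≤ b ≤ r, then k(G) < a(2^{r+1} − 1) + 2^b = k(aK_{r+1} ∪ K_b). -/

import Mathlib

open Classical Finset

namespace Paper

variable {V : Type*}

/-- The number of cliques (vertex sets inducing complete subgraphs, including
the empty set and singletons) of a graph. -/
noncomputable def cliqueCount [Fintype V] (G : SimpleGraph V) : ℕ :=
  (Finset.univ.filter fun s : Finset V => G.IsClique (s : Set V)).card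

/-- The number of cliques of size `t`. -/
noncomputable def cliqueCountSize [Fintype V] (G : SimpleGraph V) (t : ℕ) : ℕ :=
  (Finset.univ.filter fun s : Finset V => G.IsClique (s : Set V) ∧ s.card = t).card

/-- A finset of vertices is independent if its vertices are pairwise nonadjacent. -/
def IsIndepFinset (G : SimpleGraph V) (s : Finset V) : Prop :=
  (s : Set V).Pairwise fun u v => ¬ G.Adj u v

/-- The number of independent sets (including the empty set) of a graph. -/
noncomputable def indepCount [Fintype V] (G : SimpleGraph V) : ℕ :=
  (Finset.univ.filter fun s : Finset V => IsIndepFinset G s).card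

/-- The number of independent sets of size `t`. -/
noncomputable def indepCountSize [Fintype V] (G : SimpleGraph V) (t : ℕ) : ℕ :=
  (Finset.univ.filter fun s : Finset V => IsIndepFinset G s ∧ s.card = t).card

/-- `S_T`: the set of common neighbors of all vertices of `T`. -/
noncomputable def commonNbrs [Fintype V] (G : SimpleGraph V) (T : Finset V) : Finset V :=
  Finset.univ.filter fun v => ∀ x ∈ T, G.Adj x v

/-- The weight `w(C)` of a clique: the number of common neighbors of its vertices. -/
noncomputable def weight [Fintype V] (G : SimpleGraph V) (T : Finset V) : ℕ :=
  (commonNbrs G T).card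

/-- A clique `T` is tight (for max degree bound `r`) if `w(T) = r + 1 - |T|`. -/
def IsTight [Fintype V] (r : ℕ) (G : SimpleGraph V) (T : Finset V) : Prop :=
  G.IsClique (T : Set V) ∧ weight G T + T.card = r + 1

/-- A cluster is a maximal tight clique. -/
def IsCluster [Fintype V] (r : ℕ) (G : SimpleGraph V) (T : Finset V) : Prop :=
  IsTight r G T ∧ ∀ T' : Finset V, T ⊆ T' → IsTight r G T' → T' = T

/-- The graph `G_T`, obtained from `G` by adding all edges within `S_T` and deleting all
edges between `S_T` and `V(G) \ (T ∪ S_T)`. -/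
noncomputable def modGraph [Fintype V] (G : SimpleGraph V) (T : Finset V) : SimpleGraph V :=
  SimpleGraph.fromRel fun u v =>
    (u ∈ commonNbrs G T ∧ v ∈ commonNbrs G T) ∨
    (G.Adj u v ∧ ¬(u ∈ commonNbrs G T ∧ v ∉ T ∪ commonNbrs G T) ∧
      ¬(v ∈ commonNbrs G T ∧ u ∉ T ∪ commonNbrs G T))

/-- The graph `R_T`: the complement of the subgraph of `G` induced on `S_T`. -/
noncomputable def RT [Fintype V] (G : SimpleGraph V) (T : Finset V) :
    SimpleGraph ((commonNbrs G T : Finset V) : Set V) :=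
  (SimpleGraph.induce ((commonNbrs G T : Finset V) : Set V) G)ᶜ

/-- `δ_I`: the minimum degree in `R` over the vertices of `I`. -/
noncomputable def minDegOn {W : Type*} [Fintype W] (R : SimpleGraph W) (I : Finset W) : ℕ :=
  sInf ((fun x => R.degree x) '' (I : Set W))

/-- The fixed loss `φ(R) = Σ_{∅ ≠ I independent} (2 ^ δ_I - 1)`. -/
noncomputable def fixedLoss {W : Type*} [Fintype W] (R : SimpleGraph W) : ℕ :=
  ∑ I ∈ Finset.univ.filter (fun I : Finset W => I.Nonempty ∧ IsIndepFinset R I),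
    (2 ^ minDegOn R I - 1)

/-- The disjoint union of `a` copies of `K_{r+1}` together with one copy of `K_b`. -/
noncomputable def kUnion (a r b : ℕ) : SimpleGraph ((Fin a × Fin (r + 1)) ⊕ Fin b) :=
  SimpleGraph.fromRel fun x y =>
    match x, y with
    | Sum.inl (i, _), Sum.inl (j, _) => i = j
    | Sum.inr _, Sum.inr _ => True
    | _, _ => False

/-- The disjoint union of `a` copies of `K_3` together with one copy of the cycle `C_m`. -/
noncomputable def triCyc (a m : ℕ) : SimpleGraph ((Fin a × Fin 3) ⊕ Fin m) :=
  SimpleGraph.fromRel fun x y =>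
    match x, y with
    | Sum.inl (i, _), Sum.inl (j, _) => i = j
    | Sum.inr u, Sum.inr v => (u.val + 1) % m = v.val
    | _, _ => False

end Paper

open Paper

/-!
Write `k_t` for `cliqueCountSize G t` and `n = a(r+1) + b`. Counting edges gives
`2 k_2 ≤ n r`, and since `t C(r,t) = (r - t + 1) C(r,t-1)`, the strong inequalities say that
`k_t / C(r,t)` is non-increasing for `t ≥ 2`; hence `(r - 1) k_t ≤ n C(r,t)` for `2 ≤ t ≤ r`,
while `k_t = 0` for `t > r`. Summing with `k_0 = 1` and `k_1 = n` gives
`(r - 1) k(G) ≤ (r - 1) + n (2^r - 2)`, which is smaller than `(r - 1) k(aK_{r+1} ∪ K_b)` except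
when `r = 3`, `a = 1`, `b = 2`. There the bound only gives `k(G) ≤ 19`, and equality would need a
`K_4`-free cubic graph on six vertices with three triangles. In such a graph two triangles through
a vertex would share an edge, and the two common neighbours of that edge, together with the two
remaining vertices, force a vertex of degree four; so the triangles are disjoint and there are at
most two of them.
-/

lemma mul_choose_le_mul_choose_of_mul_le {f : ℕ → ℕ} {r s : ℕ}
    (hf : ∀ t, s < t → t ≤ r → t * f t ≤ (r + 1 - t) * f (t - 1)) :
    ∀ t, s ≤ t → t ≤ r → f t * r.choose s ≤ f s * r.choose t := by
  intro t hst
  induction t, hst using Nat.le_induction with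
  | base => exact fun _ => le_rfl
  | succ t hst ih =>
    intro htr
    have hstep : (t + 1) * f (t + 1) ≤ (r - t) * f t := by
      simpa [show r + 1 - (t + 1) = r - t by omega] using hf (t + 1) (by omega) htr
    refine Nat.le_of_mul_le_mul_left ?_ t.succ_pos
    calc (t + 1) * (f (t + 1) * r.choose s) = (t + 1) * f (t + 1) * r.choose s := by ring
      _ ≤ (r - t) * f t * r.choose s := Nat.mul_le_mul_right _ hstep
      _ = (r - t) * (f t * r.choose s) := by ring
      _ ≤ (r - t) * (f s * r.choose t) := Nat.mul_le_mul_left _ (ih (by omega))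
      _ = f s * (r.choose t * (r - t)) := by ring
      _ = (t + 1) * (f s * r.choose (t + 1)) := by rw [← Nat.choose_succ_right_eq]; ring

lemma sum_Ico_two_choose_add {r : ℕ} (hr : 1 ≤ r) :
    ∑ t ∈ Ico 2 (r + 1), r.choose t + 1 + r = 2 ^ r := by
  rw [← Nat.sum_range_choose, range_eq_Ico, sum_eq_sum_Ico_succ_bot (show 0 < r + 1 by omega),
    sum_eq_sum_Ico_succ_bot (show 1 < r + 1 by omega)]
  simp only [Nat.choose_zero_right, Nat.choose_one_right]
  ring

lemma two_pow_mul_sub_four_add_pos {b : ℕ} (hb : 3 ≤ b) :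
    0 < (2 : ℤ) ^ b * (b - 4) + 2 * b + 4 := by
  obtain rfl | hb4 := (show b = 3 ∨ 4 ≤ b by omega)
  · norm_num
  · have : (0 : ℤ) ≤ 2 ^ b * (b - 4) :=
      mul_nonneg (by positivity) (by linarith [(by exact_mod_cast hb4 : (4 : ℤ) ≤ b)])
    linarith

-- The gap in `sub_one_add_mul_lt_sub_one_mul` at `a = 1`, `r = b + c`; it vanishes at `(2, 1)`.
lemma two_pow_mul_add_pos {b c : ℕ} (hbc : 3 ≤ b + c) (hex : ¬(b = 2 ∧ c = 1)) :
    0 < (2 : ℤ) ^ b * ((c - 3) * 2 ^ c + b + c - 1) + 2 * b + 4 := by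
  rcases c with _ | _ | _ | c
  · have := two_pow_mul_sub_four_add_pos (b := b) (by omega)
    push_cast
    linarith
  · have := two_pow_mul_sub_four_add_pos (b := b) (by omega)
    push_cast
    linarith
  · obtain rfl | rfl | hb := (show b = 1 ∨ b = 2 ∨ 3 ≤ b by omega)
    · norm_num
    · norm_num
    · have := two_pow_mul_sub_four_add_pos hb
      have : (0 : ℤ) ≤ 2 ^ b := by positivity
      push_cast
      nlinarith
  · push_cast
    ring_nf
    positivity

lemma sub_one_add_mul_lt_sub_one_mul {r a b : ℕ} (hr : 3 ≤ r) (ha : 1 ≤ a) (hb : b ≤ r)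
    (hex : ¬(r = 3 ∧ a = 1 ∧ b = 2)) :
    r - 1 + (a * (r + 1) + b) * (2 ^ r - 2) < (r - 1) * (a * (2 ^ (r + 1) - 1) + 2 ^ b) := by
  obtain ⟨c, rfl⟩ := Nat.exists_eq_add_of_le hb
  have h2 : 2 ≤ 2 ^ (b + c) :=
    (show 2 ≤ 2 ^ 3 by norm_num).trans (Nat.pow_le_pow_right (by norm_num) hr)
  zify [show 1 ≤ b + c by omega, h2, show 1 ≤ 2 ^ (b + c + 1) from Nat.one_le_two_pow]
  have hgap : ((b : ℤ) + c - 1) * (a * (2 ^ (b + c + 1) - 1) + 2 ^ b)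
      - ((b : ℤ) + c - 1 + (a * ((b : ℤ) + c + 1) + b) * (2 ^ (b + c) - 2))
      = (a - 1) * (((b : ℤ) + c - 3) * 2 ^ (b + c) + b + c + 3)
        + (2 ^ b * ((c - 3) * 2 ^ c + b + c - 1) + 2 * b + 4) := by
    ring
  have hA : (0 : ℤ) < ((b : ℤ) + c - 3) * 2 ^ (b + c) + b + c + 3 := by
    have : (0 : ℤ) ≤ ((b : ℤ) + c - 3) * 2 ^ (b + c) :=
      mul_nonneg (by linarith [(by exact_mod_cast hr : (3 : ℤ) ≤ b + c)]) (by positivity)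
    linarith
  have ha' : (0 : ℤ) ≤ a - 1 := by linarith [(by exact_mod_cast ha : (1 : ℤ) ≤ a)]
  by_cases hbc : b = 2 ∧ c = 1
  · obtain ⟨rfl, rfl⟩ := hbc
    have ha2 : (2 : ℤ) ≤ a := by exact_mod_cast (show 2 ≤ a by omega)
    norm_num at hgap ⊢
    linarith
  · linarith [two_pow_mul_add_pos (show 3 ≤ b + c from hr) hbc, mul_nonneg ha' hA.le]

namespace SimpleGraph

variable {V : Type*} {G : SimpleGraph V} {d : ℕ}

lemma exists_eq_triple_of_isNClique_three {T : Finset V} {v : V} (hT : G.IsNClique 3 T)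
    (hv : v ∈ T) : ∃ x y, G.Adj v x ∧ G.Adj v y ∧ G.Adj x y ∧ T = {v, x, y} := by
  obtain ⟨a, b, c, hab, hac, hbc, rfl⟩ := is3Clique_iff.mp hT
  simp only [mem_insert, mem_singleton] at hv
  rcases hv with rfl | rfl | rfl
  · exact ⟨b, c, hab, hac, hbc, rfl⟩
  · exact ⟨a, c, hab.symm, hbc, hac, Finset.insert_comm _ _ _⟩
  · exact ⟨a, b, hac.symm, hbc.symm, hab, by rw [Finset.pair_comm, Finset.insert_comm]⟩

variable [Fintype V]

lemma isRegularOfDegree_of_sum_degrees_eq (hdeg : ∀ v, G.degree v ≤ d)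
    (hsum : ∑ v, G.degree v = Fintype.card V * d) : G.IsRegularOfDegree d := fun v =>
  (Finset.sum_eq_sum_iff_of_le fun v _ => hdeg v).mp (by simpa [mul_comm] using hsum) v
    (mem_univ v)

lemma IsRegularOfDegree.neighborFinset_eq_of_subset (hreg : G.IsRegularOfDegree d) {v : V}
    {s : Finset V} (hs : s ⊆ G.neighborFinset v) (hcard : d ≤ #s) : G.neighborFinset v = s :=
  (Finset.eq_of_subset_of_card_le hs
    (by rwa [card_neighborFinset_eq_degree, hreg.degree_eq v])).symm

lemma IsRegularOfDegree.adj_of_not_adj_of_not_adj (hV : Fintype.card V = d + 3)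
    (hreg : G.IsRegularOfDegree d) {x y z w : V} (hxy : x ≠ y) (hxz : x ≠ z) (hyz : y ≠ z)
    (hy : ¬G.Adj x y) (hz : ¬G.Adj x z) (hw : w ∉ ({x, y, z} : Finset V)) : G.Adj x w := by
  have hN : G.neighborFinset x = {x, y, z}ᶜ := by
    refine Finset.eq_of_subset_of_card_le (fun u hu => ?_) ?_
    · have hxu : G.Adj x u := (mem_neighborFinset _ _ _).mp hu
      simp only [mem_compl, mem_insert, mem_singleton, not_or]
      exact ⟨hxu.ne', fun h => hy (h ▸ hxu), fun h => hz (h ▸ hxu)⟩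
    · rw [card_compl, card_neighborFinset_eq_degree, hreg.degree_eq x, hV,
        card_eq_three.mpr ⟨x, y, z, hxy, hxz, hyz, rfl⟩, Nat.add_sub_cancel]
  rw [← mem_neighborFinset, hN, mem_compl]
  exact hw

lemma eq_of_common_neighbors_of_adj (hV : Fintype.card V = 6) (hreg : G.IsRegularOfDegree 3)
    (hK4 : G.CliqueFree 4) {v c p q : V} (hvc : G.Adj v c) (hvp : G.Adj v p) (hcp : G.Adj c p)
    (hvq : G.Adj v q) (hcq : G.Adj c q) : p = q := by
  by_contra hpq
  have hpq' : ¬G.Adj p q := fun hpq' =>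
    hK4 {v, c, p, q}
      ((is3Clique_triple_iff.mpr ⟨hcp, hcq, hpq'⟩).insert (by simp [hvc, hvp, hvq]))
  have hNv : G.neighborFinset v = {c, p, q} := hreg.neighborFinset_eq_of_subset
    (by simp [insert_subset_iff, hvc, hvp, hvq])
    (card_eq_three.mpr ⟨c, p, q, hcp.ne, hcq.ne, hpq, rfl⟩).ge
  have hNc : G.neighborFinset c = {v, p, q} := hreg.neighborFinset_eq_of_subset
    (by simp [insert_subset_iff, hvc.symm, hcp, hcq])
    (card_eq_three.mpr ⟨v, p, q, hvp.ne, hvq.ne, hpq, rfl⟩).ge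
  have hfar : ∀ x ∉ ({v, c, p, q} : Finset V), G.Adj p x := by
    intro x hx
    simp only [mem_insert, mem_singleton, not_or] at hx
    obtain ⟨hxv, hxc, hxp, hxq⟩ := hx
    have hxv' : ¬G.Adj x v := fun h => by
      simpa [hNv, hxc, hxp, hxq] using (mem_neighborFinset _ _ _).mpr h.symm
    have hxc' : ¬G.Adj x c := fun h => by
      simpa [hNc, hxv, hxp, hxq] using (mem_neighborFinset _ _ _).mpr h.symm
    exact (hreg.adj_of_not_adj_of_not_adj hV hxv hxc hvc.ne hxv' hxc'
      (by simp [Ne.symm hxp, hvp.ne', hcp.ne'])).symm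
  have hsub : ({p, q} : Finset V)ᶜ ⊆ G.neighborFinset p := by
    intro x hx
    simp only [mem_compl, mem_insert, mem_singleton, not_or] at hx
    rw [mem_neighborFinset]
    by_cases hxv : x = v
    · exact hxv ▸ hvp.symm
    by_cases hxc : x = c
    · exact hxc ▸ hcp.symm
    exact hfar x (by simp [hxv, hxc, hx.1, hx.2])
  have := Finset.card_le_card hsub
  rw [card_compl, card_pair hpq, card_neighborFinset_eq_degree, hreg.degree_eq p, hV] at this
  omega

lemma mem_pair_of_triangles (hV : Fintype.card V = 6) (hreg : G.IsRegularOfDegree 3)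
    (hK4 : G.CliqueFree 4) {v x y z w : V} (hvx : G.Adj v x) (hvy : G.Adj v y)
    (hxy : G.Adj x y) (hvz : G.Adj v z) (hvw : G.Adj v w) (hzw : G.Adj z w) :
    x ∈ ({z, w} : Finset V) := by
  by_contra hx
  simp only [mem_insert, mem_singleton, not_or] at hx
  have hNv : G.neighborFinset v = {x, z, w} := hreg.neighborFinset_eq_of_subset
    (by simp [insert_subset_iff, hvx, hvz, hvw])
    (card_eq_three.mpr ⟨x, z, w, hx.1, hx.2, hzw.ne, rfl⟩).ge
  have hy : y ∈ ({x, z, w} : Finset V) := hNv ▸ (mem_neighborFinset _ _ _).mpr hvy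
  simp only [mem_insert, mem_singleton] at hy
  rcases hy with rfl | rfl | rfl
  · exact hxy.ne rfl
  · exact hx.2 (eq_of_common_neighbors_of_adj hV hreg hK4 hvy hvx hxy.symm hvw hzw)
  · exact hx.1 (eq_of_common_neighbors_of_adj hV hreg hK4 hvy hvx hxy.symm hvz hzw.symm)

lemma eq_of_mem_cliqueFinset_three (hV : Fintype.card V = 6) (hreg : G.IsRegularOfDegree 3)
    (hK4 : G.CliqueFree 4) {T₁ T₂ : Finset V} {v : V} (hT₁ : T₁ ∈ G.cliqueFinset 3)
    (hT₂ : T₂ ∈ G.cliqueFinset 3) (hv₁ : v ∈ T₁) (hv₂ : v ∈ T₂) : T₁ = T₂ := by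
  obtain ⟨x, y, hvx, hvy, hxy, rfl⟩ :=
    exists_eq_triple_of_isNClique_three (mem_cliqueFinset_iff.mp hT₁) hv₁
  obtain ⟨z, w, hvz, hvw, hzw, rfl⟩ :=
    exists_eq_triple_of_isNClique_three (mem_cliqueFinset_iff.mp hT₂) hv₂
  have hsub : ({x, y} : Finset V) ⊆ {z, w} := insert_subset_iff.mpr
    ⟨mem_pair_of_triangles hV hreg hK4 hvx hvy hxy hvz hvw hzw,
      singleton_subset_iff.mpr
        (mem_pair_of_triangles hV hreg hK4 hvy hvx hxy.symm hvz hvw hzw)⟩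
  rw [Finset.eq_of_subset_of_card_le hsub (by rw [card_pair hxy.ne]; exact card_le_two)]

lemma card_cliqueFinset_three_le_two (hV : Fintype.card V = 6) (hreg : G.IsRegularOfDegree 3)
    (hK4 : G.CliqueFree 4) : #(G.cliqueFinset 3) ≤ 2 := by
  have h := Finset.sum_card_le (B := G.cliqueFinset 3) (n := 1) fun v =>
    card_le_one.mpr fun T₁ h₁ T₂ h₂ => by
      rw [mem_filter] at h₁ h₂
      exact eq_of_mem_cliqueFinset_three hV hreg hK4 h₁.1 h₂.1 h₁.2 h₂.2
  rw [Finset.sum_congr rfl fun T hT => (mem_cliqueFinset_iff.mp hT).card_eq, sum_const,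
    smul_eq_mul, hV] at h
  omega

end SimpleGraph

namespace Paper

open SimpleGraph

variable {V : Type*} [Fintype V] {G : SimpleGraph V} {r t : ℕ}

lemma cliqueCountSize_eq_card_cliqueFinset (G : SimpleGraph V) (t : ℕ) :
    cliqueCountSize G t = #(G.cliqueFinset t) := by
  simp only [cliqueCountSize, cliqueFinset, isNClique_iff]

lemma cliqueCountSize_zero (G : SimpleGraph V) : cliqueCountSize G 0 = 1 := by
  simp [cliqueCountSize_eq_card_cliqueFinset, cliqueFinset, Finset.filter_eq']

lemma cliqueCountSize_one (G : SimpleGraph V) : cliqueCountSize G 1 = Fintype.card V := by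
  rw [cliqueCountSize_eq_card_cliqueFinset, ← Finset.card_univ,
    ← Finset.card_image_of_injective univ Finset.singleton_injective]
  congr 1
  ext s
  simp [eq_comm]

lemma cliqueCountSize_two (G : SimpleGraph V) : cliqueCountSize G 2 = #G.edgeFinset := by
  rw [cliqueCountSize_eq_card_cliqueFinset]
  symm
  refine Finset.card_bij (fun e _ => e.toFinset) ?_ ?_ ?_
  · intro e he
    induction e using Sym2.ind with
    | _ x y =>
      have hxy : G.Adj x y := by simpa using he
      simp [Sym2.toFinset_mk_eq, isNClique_iff, hxy, hxy.ne]
  · intro e _ e' _ h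
    exact Sym2.ext fun x => by rw [← Sym2.mem_toFinset, h, Sym2.mem_toFinset]
  · intro s hs
    obtain ⟨hs, hcard⟩ := (G.isNClique_iff).mp (mem_cliqueFinset_iff.mp hs)
    obtain ⟨x, y, hxy, rfl⟩ := Finset.card_eq_two.mp hcard
    exact ⟨s(x, y), by simpa using hs (by simp) (by simp) hxy, Sym2.toFinset_mk_eq⟩

lemma two_mul_cliqueCountSize_two_le (hdeg : G.maxDegree ≤ r) :
    2 * cliqueCountSize G 2 ≤ Fintype.card V * r := by
  rw [cliqueCountSize_two, ← sum_degrees_eq_twice_card_edges]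
  calc ∑ v, G.degree v ≤ ∑ _v : V, r :=
        Finset.sum_le_sum fun v _ => (G.degree_le_maxDegree v).trans hdeg
    _ = Fintype.card V * r := by simp

lemma cliqueCount_eq_sum_range {N : ℕ} (hN : ∀ t, N < t → cliqueCountSize G t = 0) :
    cliqueCount G = ∑ t ∈ range (N + 1), cliqueCountSize G t := by
  rw [cliqueCount, Finset.card_eq_sum_card_fiberwise (f := Finset.card) (t := range (N + 1))]
  · exact Finset.sum_congr rfl fun t _ => by simp only [cliqueCountSize, Finset.filter_filter]
  · intro s hs
    by_contra hsN
    have hempty := Finset.card_eq_zero.mp (hN #s (by simpa [Nat.lt_succ_iff] using hsN))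
    exact Finset.notMem_empty s (hempty ▸ by simpa using hs)

def StrongInequalities (r : ℕ) (G : SimpleGraph V) : Prop :=
  ∀ t : ℕ, 3 ≤ t →
    (t : ℤ) * cliqueCountSize G t ≤ ((r : ℤ) - t + 1) * cliqueCountSize G (t - 1)

namespace StrongInequalities

lemma mul_le (h : StrongInequalities r G) (ht : 3 ≤ t) (htr : t ≤ r + 1) :
    t * cliqueCountSize G t ≤ (r + 1 - t) * cliqueCountSize G (t - 1) := by
  have := h t ht
  zify [htr]
  linarith

lemma cliqueCountSize_eq_zero (h : StrongInequalities r G) (hr : 2 ≤ r) (ht : r < t) :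
    cliqueCountSize G t = 0 := by
  have hcoef : (r : ℤ) - t + 1 ≤ 0 := by omega
  have hprod : (t : ℤ) * cliqueCountSize G t ≤ 0 :=
    (h t (by omega)).trans (mul_nonpos_of_nonpos_of_nonneg hcoef (by positivity))
  have ht0 : (0 : ℤ) < t := by omega
  exact_mod_cast le_antisymm (nonpos_of_mul_nonpos_right hprod ht0) (by positivity)

lemma sub_one_mul_cliqueCountSize_le (h : StrongInequalities r G) (hdeg : G.maxDegree ≤ r)
    (ht : 2 ≤ t) (htr : t ≤ r) :
    (r - 1) * cliqueCountSize G t ≤ Fintype.card V * r.choose t := by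
  have hratio := mul_choose_le_mul_choose_of_mul_le (f := cliqueCountSize G)
    (fun t ht htr => h.mul_le (by omega) (by omega)) t ht htr
  have hedges := two_mul_cliqueCountSize_two_le hdeg
  have hchoose : r.choose 2 * 2 = r * (r - 1) := by
    simpa using Nat.choose_succ_right_eq r 1
  refine Nat.le_of_mul_le_mul_left ?_ (show 0 < r by omega)
  calc r * ((r - 1) * cliqueCountSize G t) = 2 * (cliqueCountSize G t * r.choose 2) := by
        rw [mul_comm 2, mul_assoc, hchoose]; ring
    _ ≤ 2 * (cliqueCountSize G 2 * r.choose t) := Nat.mul_le_mul_left _ hratio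
    _ = 2 * cliqueCountSize G 2 * r.choose t := by ring
    _ ≤ Fintype.card V * r * r.choose t := Nat.mul_le_mul_right _ hedges
    _ = r * (Fintype.card V * r.choose t) := by ring

lemma cliqueCount_eq (h : StrongInequalities r G) (hr : 2 ≤ r) :
    cliqueCount G = 1 + Fintype.card V + ∑ t ∈ Ico 2 (r + 1), cliqueCountSize G t := by
  rw [cliqueCount_eq_sum_range fun t => h.cliqueCountSize_eq_zero hr, range_eq_Ico,
    sum_eq_sum_Ico_succ_bot (show 0 < r + 1 by omega),
    sum_eq_sum_Ico_succ_bot (show 1 < r + 1 by omega), cliqueCountSize_zero,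
    cliqueCountSize_one, add_assoc]

lemma sub_one_mul_cliqueCount_le (h : StrongInequalities r G) (hdeg : G.maxDegree ≤ r)
    (hr : 2 ≤ r) : (r - 1) * cliqueCount G ≤ r - 1 + Fintype.card V * (2 ^ r - 2) := by
  have hsum : ∑ t ∈ Ico 2 (r + 1), (r - 1) * cliqueCountSize G t
      ≤ ∑ t ∈ Ico 2 (r + 1), Fintype.card V * r.choose t :=
    Finset.sum_le_sum fun t ht =>
      h.sub_one_mul_cliqueCountSize_le hdeg (mem_Ico.mp ht).1 (Nat.le_of_lt_succ (mem_Ico.mp ht).2)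
  rw [← Finset.mul_sum, ← Finset.mul_sum] at hsum
  have hchoose := sum_Ico_two_choose_add (show 1 ≤ r by omega)
  rw [h.cliqueCount_eq hr, show 2 ^ r - 2 = r - 1 + ∑ t ∈ Ico 2 (r + 1), r.choose t by omega]
  calc (r - 1) * (1 + Fintype.card V + ∑ t ∈ Ico 2 (r + 1), cliqueCountSize G t)
      = r - 1 + (r - 1) * Fintype.card V
          + (r - 1) * ∑ t ∈ Ico 2 (r + 1), cliqueCountSize G t := by ring
    _ ≤ r - 1 + (r - 1) * Fintype.card V
          + Fintype.card V * ∑ t ∈ Ico 2 (r + 1), r.choose t := by gcongr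
    _ = _ := by ring

lemma cliqueCount_lt_nineteen (h : StrongInequalities 3 G) (hV : Fintype.card V = 6)
    (hdeg : G.maxDegree ≤ 3) : cliqueCount G < 19 := by
  have hcount := h.cliqueCount_eq (by norm_num)
  simp only [hV, sum_eq_sum_Ico_succ_bot (show 2 < 4 by norm_num),
    sum_eq_sum_Ico_succ_bot (show 3 < 4 by norm_num), Ico_self, sum_empty] at hcount
  have hedges := two_mul_cliqueCountSize_two_le hdeg
  have htriangles : 3 * cliqueCountSize G 3 ≤ cliqueCountSize G 2 := by
    simpa using h.mul_le (t := 3) le_rfl (by norm_num)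
  rw [hV] at hedges
  have hk3 : cliqueCountSize G 3 ≤ 2 := by
    by_cases hk2 : cliqueCountSize G 2 = 9
    · have hreg : G.IsRegularOfDegree 3 :=
        isRegularOfDegree_of_sum_degrees_eq (fun v => (G.degree_le_maxDegree v).trans hdeg)
          (by rw [sum_degrees_eq_twice_card_edges, ← cliqueCountSize_two, hk2, hV])
      have hK4 : G.CliqueFree 4 := cliqueFinset_eq_empty_iff.mp <| card_eq_zero.mp <| by
        rw [← cliqueCountSize_eq_card_cliqueFinset]
        exact h.cliqueCountSize_eq_zero (by norm_num) (by norm_num)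
      rw [cliqueCountSize_eq_card_cliqueFinset]
      exact card_cliqueFinset_three_le_two hV hreg hK4
    · omega
  omega

end StrongInequalities

section

variable {ι : Type*} [Fintype ι] [DecidableEq ι]

lemma cliqueCount_eq_of_adj_iff (f : V → ι) (hG : ∀ x y, G.Adj x y ↔ x ≠ y ∧ f x = f y) :
    cliqueCount G = 1 + ∑ i, (2 ^ #{x | f x = i} - 1) := by
  have hcliques : (univ.filter fun s : Finset V => G.IsClique (s : Set V))
      = insert ∅ (univ.biUnion fun i => (univ.filter (f · = i)).powerset.erase ∅) := by
    ext s
    simp only [mem_filter, mem_univ, true_and, mem_insert, mem_biUnion, mem_erase, mem_powerset,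
      subset_iff, SimpleGraph.IsClique, Set.Pairwise, mem_coe, hG]
    constructor
    · intro hs
      obtain rfl | ⟨x, hx⟩ := s.eq_empty_or_nonempty
      · exact Or.inl rfl
      · exact Or.inr ⟨f x, ne_empty_of_mem hx, fun y hy =>
          (eq_or_ne y x).elim (fun h => h ▸ rfl) fun h => (hs hy hx h).2⟩
    · rintro (rfl | ⟨i, -, hs⟩)
      · simp
      · exact fun x hx y hy hxy => ⟨hxy, (hs hx).trans (hs hy).symm⟩
  rw [cliqueCount, hcliques, card_insert_of_notMem (by simp), card_biUnion, add_comm]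
  · simp only [card_erase_of_mem (empty_mem_powerset _), card_powerset]
  · intro i _ j _ hij
    simp only [Function.onFun, Finset.disjoint_left, mem_erase, mem_powerset]
    rintro s ⟨hs, hsi⟩ ⟨-, hsj⟩
    obtain ⟨x, hx⟩ := nonempty_iff_ne_empty.mpr hs
    exact hij ((mem_filter.mp (hsi hx)).2.symm.trans (mem_filter.mp (hsj hx)).2)

end

section

variable {a b : ℕ}

def kUnionPart : (Fin a × Fin (r + 1)) ⊕ Fin b → Option (Fin a) :=
  Sum.elim (some ·.1) fun _ => none

lemma kUnion_adj_iff (x y : (Fin a × Fin (r + 1)) ⊕ Fin b) :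
    (kUnion a r b).Adj x y ↔ x ≠ y ∧ kUnionPart x = kUnionPart y := by
  rcases x with ⟨i, s⟩ | u <;> rcases y with ⟨j, t⟩ | v <;> simp [kUnion, kUnionPart, eq_comm]

lemma card_kUnionPart_eq_none : #{x : (Fin a × Fin (r + 1)) ⊕ Fin b | kUnionPart x = none} = b :=
  calc _ = #(univ.map (.inr : Fin b ↪ (Fin a × Fin (r + 1)) ⊕ Fin b)) := by
        congr 1
        ext x
        simp only [mem_filter, mem_univ, true_and, mem_map]
        rcases x with _ | _ <;> simp [kUnionPart]
    _ = b := by simp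

lemma card_kUnionPart_eq_some (i : Fin a) :
    #{x : (Fin a × Fin (r + 1)) ⊕ Fin b | kUnionPart x = some i} = r + 1 :=
  calc _ = #(univ.map ((Function.Embedding.sectR i _).trans .inl :
          Fin (r + 1) ↪ (Fin a × Fin (r + 1)) ⊕ Fin b)) := by
        congr 1
        ext x
        simp only [mem_filter, mem_univ, true_and, mem_map]
        rcases x with ⟨j, t⟩ | _ <;> simp [kUnionPart, eq_comm]
    _ = r + 1 := by simp

lemma cliqueCount_kUnion (a r b : ℕ) :
    cliqueCount (kUnion a r b) = a * (2 ^ (r + 1) - 1) + 2 ^ b := by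
  rw [cliqueCount_eq_of_adj_iff _ kUnion_adj_iff, Fintype.sum_option, card_kUnionPart_eq_none]
  simp only [card_kUnionPart_eq_some, sum_const, card_univ, Fintype.card_fin, smul_eq_mul]
  have := b.one_le_two_pow
  omega

end

end Paper

/-- **Corollary 5.3.** Let `r ≥ 3` and let `G` be a graph on `n` vertices with `Δ(G) ≤ r`
satisfying the strong inequalities `t k_t(G) ≤ (r - t + 1) k_{t-1}(G)` for all `t ≥ 3`.
If `n = a(r+1) + b` with `a ≥ 1` and `0 ≤ b ≤ r`, then
`k(G) < a(2^{r+1} - 1) + 2^b = k(aK_{r+1} ∪ K_b)`. -/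
theorem stmt17 {V : Type*} [Fintype V] (n r a b : ℕ) (hr : 3 ≤ r) (ha : 1 ≤ a) (hb : b ≤ r)
    (hn : n = a * (r + 1) + b) (hcard : Fintype.card V = n) (G : SimpleGraph V)
    (hdeg : G.maxDegree ≤ r)
    (hstrong : ∀ t : ℕ, 3 ≤ t →
      (t : ℤ) * cliqueCountSize G t ≤ ((r : ℤ) - t + 1) * cliqueCountSize G (t - 1)) :
    cliqueCount G < a * (2 ^ (r + 1) - 1) + 2 ^ b ∧
      cliqueCount (kUnion a r b) = a * (2 ^ (r + 1) - 1) + 2 ^ b := by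
  refine ⟨?_, cliqueCount_kUnion a r b⟩
  subst hn
  by_cases hex : r = 3 ∧ a = 1 ∧ b = 2
  · obtain ⟨rfl, rfl, rfl⟩ := hex
    exact StrongInequalities.cliqueCount_lt_nineteen hstrong hcard hdeg
  · have hbound := StrongInequalities.sub_one_mul_cliqueCount_le hstrong hdeg (by omega)
    rw [hcard] at hbound
    exact Nat.lt_of_mul_lt_mul_left (hbound.trans_lt (sub_one_add_mul_lt_sub_one_mul hr ha hb hex))
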